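/- arXiv:1402.4982 — 3 statements merged into one kernel-verified Lean document; each statement's English description precedes it below -/
import Mathlib

section
/- Let f, g : [-1,1] → ℝ be such that f is of r-H_f-Hölder type on [−1,1], i.e. |f(x) − f(y)| ≤ H_f·|x − y|^r for all x, y ∈ [−1,1], where r > 0 and H_f > 0 are given, and g is of bounded variation on [−1,1] with g(−1) < g(1). Define A = (√3/2)·[∫_{-1}^{1} g(t) dt − ((3−√3)/3)·g(1) − ((3+√3)/3)·g(−1)] and B = (√3/2)·[((3+√3)/3)·g(1) + ((3−√3)/3)·g(−1) − ∫_{-1}^{1} g(t) dt], and assume A ≥ 0 and B ≥ 0. Then |∫_{-1}^{1} f(t) dg(t) − A·f(−√3/3) − B·f(√3/3)| ≤ H_f·((3+√3)/3)^r · V_{-1}^{1}(g), where V_{-1}^{1}(g) denotes the total variation of g on [−1,1]. -/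
open MeasureTheory intervalIntegral

/-- `IsRSIntegral f g a b I` means that the Riemann–Stieltjes integral
`∫_a^b f dg` exists and equals `I`: for every `ε > 0` there is `δ > 0` such that
every tagged partition `a = t 0 ≤ t 1 ≤ ⋯ ≤ t n = b` of mesh `< δ`, with tags
`ξ i ∈ [t i, t (i+1)]`, has Riemann–Stieltjes sum within `ε` of `I`. -/
def IsRSIntegral (f g : ℝ → ℝ) (a b I : ℝ) : Prop :=
  ∀ ε > (0 : ℝ), ∃ δ > (0 : ℝ), ∀ (n : ℕ) (t : Fin (n + 1) → ℝ) (ξ : Fin n → ℝ),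
    Monotone t → t 0 = a → t (Fin.last n) = b →
    (∀ i : Fin n, ξ i ∈ Set.Icc (t i.castSucc) (t i.succ)) →
    (∀ i : Fin n, t i.succ - t i.castSucc < δ) →
    |(∑ i : Fin n, f (ξ i) * (g (t i.succ) - g (t i.castSucc))) - I| < ε

/-!
Since `A + B = g 1 - g (-1)` with `A, B ≥ 0`, the quadrature value `A f(-√3/3) + B f(√3/3)`
equals `(g 1 - g (-1)) m` for the weighted mean `m` of `f(-√3/3)` and `f(√3/3)`. Every point of
`[-1, 1]` lies within `(3 + √3)/3` of both nodes, so `|f ξ - m| ≤ K := H_f ((3 + √3)/3)^r` there.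
Telescoping `g 1 - g (-1) = ∑ Δgᵢ`, every Riemann–Stieltjes sum differs from `(g 1 - g (-1)) m`
by `∑ (f ξᵢ - m) Δgᵢ`, which is at most `K ∑ |Δgᵢ| ≤ K V(g)`; fine partitions carry this bound
over to the integral.
-/

open Set

def stieltjesSum (f g : ℝ → ℝ) {n : ℕ} (t : Fin (n + 1) → ℝ) (ξ : Fin n → ℝ) : ℝ :=
  ∑ i : Fin n, f (ξ i) * (g (t i.succ) - g (t i.castSucc))

namespace Fin

lemma clamp_val_add_one_eq_succ {n : ℕ} (i : Fin n) : clamp (i + 1) n = i.succ := by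
  ext; simp

lemma clamp_val_eq_castSucc {n : ℕ} (i : Fin n) : clamp i n = i.castSucc := by
  ext; simp [i.isLt.le]

lemma sum_univ_eq_sum_range_clamp {M : Type*} [AddCommMonoid M] {n : ℕ} {α : Type*}
    (t : Fin (n + 1) → α) (F : α → α → M) :
    ∑ i : Fin n, F (t i.succ) (t i.castSucc)
      = ∑ i ∈ Finset.range n, F (t (clamp (i + 1) n)) (t (clamp i n)) := by
  rw [← Fin.sum_univ_eq_sum_range (fun i => F (t (clamp (i + 1) n)) (t (clamp i n)))]
  simp only [clamp_val_add_one_eq_succ, clamp_val_eq_castSucc]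

lemma sum_univ_succ_sub_castSucc {G : Type*} [AddCommGroup G] {n : ℕ} (v : Fin (n + 1) → G) :
    ∑ i : Fin n, (v i.succ - v i.castSucc) = v (last n) - v 0 := by
  rw [sum_univ_eq_sum_range_clamp v (· - ·), Finset.sum_range_sub (fun j => v (clamp j n)),
    clamp_eq_last n n le_rfl]
  rfl

end Fin

lemma sum_dist_le_eVariationOn {α E : Type*} [LinearOrder α] [PseudoMetricSpace E]
    {g : α → E} {s : Set α} (hg : BoundedVariationOn g s) {n : ℕ} {t : Fin (n + 1) → α}
    (ht : Monotone t) (hts : ∀ i, t i ∈ s) :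
    ∑ i : Fin n, dist (g (t i.succ)) (g (t i.castSucc)) ≤ (eVariationOn g s).toReal := by
  rw [Fin.sum_univ_eq_sum_range_clamp t (fun x y => dist (g x) (g y))]
  simp only [dist_edist]
  rw [← ENNReal.toReal_sum (fun _ _ => edist_ne_top _ _)]
  exact ENNReal.toReal_mono hg
    (eVariationOn.sum_le (ht.comp Fin.clamp_monotone) fun j => hts _)

lemma exists_monotone_partition_mesh_lt {a b δ : ℝ} (hab : a ≤ b) (hδ : 0 < δ) :
    ∃ (n : ℕ) (t : Fin (n + 1) → ℝ), Monotone t ∧ t 0 = a ∧ t (Fin.last n) = b ∧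
      ∀ i : Fin n, t i.succ - t i.castSucc < δ := by
  obtain ⟨n, hn⟩ := exists_nat_gt ((b - a) / δ)
  have hn0 : (0 : ℝ) < n := lt_of_le_of_lt (div_nonneg (sub_nonneg.2 hab) hδ.le) hn
  refine ⟨n, fun i => a + (b - a) * i / n, fun i j hij => ?_, by simp, ?_, fun i => ?_⟩
  · have : ((i : ℕ) : ℝ) ≤ (j : ℕ) := by exact_mod_cast hij
    dsimp only
    gcongr
  · simp only [Fin.val_last]
    field_simp
    ring
  · simp only [Fin.val_succ, Fin.val_castSucc, Nat.cast_succ]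
    rw [div_lt_iff₀ hδ] at hn
    rw [show a + (b - a) * (i + 1) / n - (a + (b - a) * i / n) = (b - a) / n by field_simp; ring,
      div_lt_iff₀ hn0]
    linarith

lemma IsRSIntegral.abs_sub_le {f g : ℝ → ℝ} {a b I J C : ℝ} (hab : a ≤ b)
    (hI : IsRSIntegral f g a b I)
    (hsum : ∀ (n : ℕ) (t : Fin (n + 1) → ℝ) (ξ : Fin n → ℝ),
      Monotone t → t 0 = a → t (Fin.last n) = b →
      (∀ i : Fin n, ξ i ∈ Icc (t i.castSucc) (t i.succ)) →
      |stieltjesSum f g t ξ - J| ≤ C) :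
    |I - J| ≤ C := by
  refine le_of_forall_pos_lt_add fun ε hε => ?_
  obtain ⟨δ, hδ, hδI⟩ := hI ε hε
  obtain ⟨n, t, ht, h0, hlast, hmesh⟩ := exists_monotone_partition_mesh_lt hab hδ
  have htag : ∀ i : Fin n, t i.castSucc ∈ Icc (t i.castSucc) (t i.succ) :=
    fun i => ⟨le_rfl, ht Fin.castSucc_lt_succ.le⟩
  have hI' := hδI n t _ ht h0 hlast htag hmesh
  have hJ := hsum n t _ ht h0 hlast htag
  calc |I - J| ≤ |I - _| + |_ - J| := _root_.abs_sub_le I _ J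
    _ < ε + C := add_lt_add_of_lt_of_le (by rwa [abs_sub_comm]) hJ
    _ = C + ε := add_comm _ _

lemma abs_stieltjesSum_sub_le {f g : ℝ → ℝ} {a b m M : ℝ} (hg : BoundedVariationOn g (Icc a b))
    (hfm : ∀ y ∈ Icc a b, |f y - m| ≤ M) {n : ℕ} {t : Fin (n + 1) → ℝ} {ξ : Fin n → ℝ}
    (ht : Monotone t) (h0 : t 0 = a) (hlast : t (Fin.last n) = b)
    (hξ : ∀ i : Fin n, ξ i ∈ Icc (t i.castSucc) (t i.succ)) :
    |stieltjesSum f g t ξ - (g b - g a) * m| ≤ M * (eVariationOn g (Icc a b)).toReal := by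
  have hts : ∀ i, t i ∈ Icc a b := fun i => ⟨h0 ▸ ht (Fin.zero_le i), hlast ▸ ht (Fin.le_last i)⟩
  have hM : 0 ≤ M := (abs_nonneg _).trans (hfm _ (hts 0))
  have hsplit : stieltjesSum f g t ξ - (g b - g a) * m
      = ∑ i : Fin n, (f (ξ i) - m) * (g (t i.succ) - g (t i.castSucc)) := by
    rw [stieltjesSum, ← h0, ← hlast, ← Fin.sum_univ_succ_sub_castSucc (fun i => g (t i)),
      Finset.sum_mul,
      ← Finset.sum_sub_distrib]
    exact Finset.sum_congr rfl fun i _ => by ring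
  calc _ ≤ ∑ i : Fin n, |f (ξ i) - m| * |g (t i.succ) - g (t i.castSucc)| := by
        rw [hsplit]
        exact (Finset.abs_sum_le_sum_abs _ _).trans_eq (Finset.sum_congr rfl fun i _ => abs_mul _ _)
    _ ≤ ∑ i : Fin n, M * dist (g (t i.succ)) (g (t i.castSucc)) := by
        gcongr with i
        · exact hfm _ ⟨(hts _).1.trans (hξ i).1, (hξ i).2.trans (hts _).2⟩
        · rw [Real.dist_eq]
    _ ≤ M * (eVariationOn g (Icc a b)).toReal := by
        rw [← Finset.mul_sum]
        exact mul_le_mul_of_nonneg_left (sum_dist_le_eVariationOn hg ht hts) hM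

lemma abs_sub_weighted_mean_le {y p q M A B : ℝ} (hA : 0 ≤ A) (hB : 0 ≤ B) (hAB : 0 < A + B)
    (hp : |y - p| ≤ M) (hq : |y - q| ≤ M) : |y - (A * p + B * q) / (A + B)| ≤ M := by
  rw [show y - (A * p + B * q) / (A + B) = (A * (y - p) + B * (y - q)) / (A + B) by
    field_simp; ring, abs_div, abs_of_pos hAB, div_le_iff₀ hAB]
  calc |A * (y - p) + B * (y - q)| ≤ A * |y - p| + B * |y - q| := by
        simpa only [abs_mul, abs_of_nonneg hA, abs_of_nonneg hB] using
          abs_add_le (A * (y - p)) (B * (y - q))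
    _ ≤ M * (A + B) := by nlinarith

/-- If `f` is of `r`-`H_f`-Hölder type on `[-1,1]` and `g` is of
bounded variation on `[-1,1]` with `g (-1) < g 1`, and the weights `A`, `B` of
the two-point Gauss–Legendre rule are nonnegative, then
`|∫_{-1}^1 f dg - A·f(-√3/3) - B·f(√3/3)| ≤ H_f · ((3+√3)/3)^r · V_{-1}^1(g)`. -/
theorem two_point_GL_holder_BV (f g : ℝ → ℝ) (r Hf : ℝ) (hr : 0 < r) (hHf : 0 < Hf)
    (hf : ∀ x ∈ Set.Icc (-1 : ℝ) 1, ∀ y ∈ Set.Icc (-1 : ℝ) 1,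
      |f x - f y| ≤ Hf * |x - y| ^ r)
    (hg : BoundedVariationOn g (Set.Icc (-1 : ℝ) 1))
    (hg' : g (-1) < g 1)
    (I : ℝ) (hI : IsRSIntegral f g (-1) 1 I)
    (A B : ℝ)
    (hA : A = (Real.sqrt 3 / 2) *
      ((∫ t in (-1 : ℝ)..1, g t) - ((3 - Real.sqrt 3) / 3) * g 1
        - ((3 + Real.sqrt 3) / 3) * g (-1)))
    (hB : B = (Real.sqrt 3 / 2) *
      (((3 + Real.sqrt 3) / 3) * g 1 + ((3 - Real.sqrt 3) / 3) * g (-1)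
        - ∫ t in (-1 : ℝ)..1, g t))
    (hA0 : 0 ≤ A) (hB0 : 0 ≤ B) :
    |I - A * f (-(Real.sqrt 3) / 3) - B * f (Real.sqrt 3 / 3)|
      ≤ Hf * ((3 + Real.sqrt 3) / 3) ^ r
        * (eVariationOn g (Set.Icc (-1 : ℝ) 1)).toReal := by
  have hs : Real.sqrt 3 ^ 2 = 3 := Real.sq_sqrt (by norm_num)
  have hs0 : 0 ≤ Real.sqrt 3 := Real.sqrt_nonneg 3
  have hs2 : Real.sqrt 3 ≤ 2 := by nlinarith
  have hAB : A + B = g 1 - g (-1) := by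
    rw [hA, hB]
    linear_combination ((g 1 - g (-1)) / 3) * hs
  have hnode : ∀ x, |x| ≤ Real.sqrt 3 / 3 → ∀ y ∈ Icc (-1 : ℝ) 1,
      |f y - f x| ≤ Hf * ((3 + Real.sqrt 3) / 3) ^ r := by
    intro x hx y hy
    have hy1 : |y| ≤ 1 := abs_le.2 hy
    refine (hf y hy x (abs_le.1 (by linarith))).trans ?_
    gcongr
    calc |y - x| ≤ |y| + |x| := abs_sub _ _
      _ ≤ (3 + Real.sqrt 3) / 3 := by linarith
  set m := (A * f (-(Real.sqrt 3) / 3) + B * f (Real.sqrt 3 / 3)) / (A + B)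
  have hmean : ∀ y ∈ Icc (-1 : ℝ) 1, |f y - m| ≤ Hf * ((3 + Real.sqrt 3) / 3) ^ r :=
    fun y hy => abs_sub_weighted_mean_le hA0 hB0 (by linarith)
      (hnode _ (by rw [abs_div, abs_neg, abs_of_nonneg hs0]; norm_num) y hy)
      (hnode _ (by rw [abs_div, abs_of_nonneg hs0]; norm_num) y hy)
  have hquad : A * f (-(Real.sqrt 3) / 3) + B * f (Real.sqrt 3 / 3) = (g 1 - g (-1)) * m := by
    rw [← hAB, mul_div_cancel₀ _ (by linarith)]
  rw [sub_sub, hquad]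
  exact hI.abs_sub_le (by norm_num) fun n t ξ ht h0 hlast hξ =>
    abs_stieltjesSum_sub_le hg hmean ht h0 hlast hξ
end

section
/- Let f, g : [-1,1] → ℝ be such that f is of r-H_f-Hölder type on [−1,1], i.e. |f(x) − f(y)| ≤ H_f·|x − y|^r for all x, y ∈ [−1,1], where r > 0 and H_f > 0 are given, and g is L_g-Lipschitzian on [−1,1], i.e. |g(x) − g(y)| ≤ L_g·|x − y| for all x, y ∈ [−1,1], with g(−1) < g(1). Define A = (√3/2)·[∫_{-1}^{1} g(t) dt − ((3−√3)/3)·g(1) − ((3+√3)/3)·g(−1)] and B = (√3/2)·[((3+√3)/3)·g(1) + ((3−√3)/3)·g(−1) − ∫_{-1}^{1} g(t) dt], and assume A ≥ 0 and B ≥ 0. Then |∫_{-1}^{1} f(t) dg(t) − A·f(−√3/3) − B·f(√3/3)| ≤ (L_g·H_f/(r+1))·[((3−√3)/3)^{r+1} + ((3+√3)/3)^{r+1}]. -/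
/-!
By the intermediate value theorem there is `x ∈ [-1,1]` with `g x - g (-1) = A`, and then
`g 1 - g x = B` because `A + B = g 1 - g (-1)`. So the error is the limit of Riemann–Stieltjes sums
of `(f - f (-σ)) dg` over `[-1,x]` and `(f - f σ) dg` over `[x,1]`, `σ = √3/3`. Tagging every cell
at its point nearest to the node, each term is at most `L_g H_f ∫_cell |τ - node|^r`, so the error
is at most `L_g H_f (∫_{-1}^x |τ + σ|^r + ∫_x^1 |τ - σ|^r)`. If `x ≤ 0` then `|τ + σ| ≤ |τ - σ|`
on `[-1,x]`, so this is at most `L_g H_f ∫_{-1}^1 |τ - σ|^r`, and symmetrically for `x ≥ 0`; both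
full integrals equal `((1-σ)^(r+1) + (1+σ)^(r+1))/(r+1)`.
-/

open MeasureTheory intervalIntegral

open Set

lemma abs_max_min_sub_le {u v c τ : ℝ} (hτ : τ ∈ Icc u v) :
    |max u (min c v) - c| ≤ |τ - c| := by
  obtain ⟨hu, hv⟩ := hτ
  rcases le_total c u with hc | hc
  · rw [min_eq_left (hc.trans (hu.trans hv)), max_eq_left hc, abs_of_nonneg (by linarith),
      abs_of_nonneg (by linarith)]
    linarith
  rcases le_total c v with hc' | hc'
  · simp [min_eq_left hc', max_eq_right hc]
  · rw [min_eq_right hc', max_eq_right (hu.trans hv), abs_of_nonpos (by linarith),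
      abs_of_nonpos (by linarith)]
    linarith

lemma abs_sub_le_abs_sub_of_two_mul_le {τ c₁ c₂ : ℝ} (hc : c₁ ≤ c₂) (hτ : 2 * τ ≤ c₁ + c₂) :
    |τ - c₁| ≤ |τ - c₂| := by
  rcases abs_cases (τ - c₁) with h | h <;> rcases abs_cases (τ - c₂) with h' | h' <;> linarith

lemma continuous_abs_sub_rpow {r : ℝ} (hr : 0 ≤ r) (c : ℝ) : Continuous fun τ : ℝ => |τ - c| ^ r :=
  (continuous_abs.comp (continuous_sub_right c)).rpow_const fun _ => Or.inr hr

lemma intervalIntegrable_abs_sub_rpow {r : ℝ} (hr : 0 ≤ r) (c a b : ℝ) :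
    IntervalIntegrable (fun τ : ℝ => |τ - c| ^ r) volume a b :=
  (continuous_abs_sub_rpow hr c).intervalIntegrable a b

lemma integral_abs_sub_rpow {r a b c : ℝ} (hr : 0 ≤ r) (hac : a ≤ c) (hcb : c ≤ b) :
    ∫ τ in a..b, |τ - c| ^ r = ((c - a) ^ (r + 1) + (b - c) ^ (r + 1)) / (r + 1) := by
  have hr1 : r + 1 ≠ 0 := by positivity
  have hleft : ∫ τ in a..c, |τ - c| ^ r = (c - a) ^ (r + 1) / (r + 1) := by
    rw [intervalIntegral.integral_congr (g := fun τ => (c - τ) ^ r) fun τ hτ => by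
      rw [uIcc_of_le hac] at hτ; simp only [abs_sub_comm τ c, abs_of_nonneg (sub_nonneg.2 hτ.2)]]
    rw [intervalIntegral.integral_comp_sub_left (fun τ => τ ^ r), sub_self,
      integral_rpow (Or.inl (by linarith)), Real.zero_rpow hr1, sub_zero]
  have hright : ∫ τ in c..b, |τ - c| ^ r = (b - c) ^ (r + 1) / (r + 1) := by
    rw [intervalIntegral.integral_congr (g := fun τ => (τ - c) ^ r) fun τ hτ => by
      rw [uIcc_of_le hcb] at hτ; simp only [abs_of_nonneg (sub_nonneg.2 hτ.1)]]
    rw [intervalIntegral.integral_comp_sub_right (fun τ => τ ^ r), sub_self,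
      integral_rpow (Or.inl (by linarith)), Real.zero_rpow hr1, sub_zero]
  rw [← intervalIntegral.integral_add_adjacent_intervals (intervalIntegrable_abs_sub_rpow hr c a c)
    (intervalIntegrable_abs_sub_rpow hr c c b), hleft, hright, add_div]

lemma integral_abs_sub_rpow_add_le_max {r a b x c₁ c₂ : ℝ} (hr : 0 ≤ r) (hc : c₁ ≤ c₂)
    (hax : a ≤ x) (hxb : x ≤ b) :
    (∫ τ in a..x, |τ - c₁| ^ r) + ∫ τ in x..b, |τ - c₂| ^ r
      ≤ max (∫ τ in a..b, |τ - c₁| ^ r) (∫ τ in a..b, |τ - c₂| ^ r) := by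
  have hint := intervalIntegrable_abs_sub_rpow hr
  rcases le_total (2 * x) (c₁ + c₂) with hmid | hmid
  · refine le_trans ?_ (le_max_right _ _)
    rw [← intervalIntegral.integral_add_adjacent_intervals (hint c₂ a x) (hint c₂ x b)]
    gcongr
    refine intervalIntegral.integral_mono_on hax (hint c₁ a x) (hint c₂ a x) fun τ hτ => ?_
    exact Real.rpow_le_rpow (abs_nonneg _)
      (abs_sub_le_abs_sub_of_two_mul_le hc (by linarith [hτ.2])) hr
  · refine le_trans ?_ (le_max_left _ _)
    rw [← intervalIntegral.integral_add_adjacent_intervals (hint c₁ a x) (hint c₁ x b)]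
    gcongr
    refine intervalIntegral.integral_mono_on hxb (hint c₂ x b) (hint c₁ x b) fun τ hτ => ?_
    have := abs_sub_le_abs_sub_of_two_mul_le (neg_le_neg hc) (τ := -τ) (by linarith [hτ.1])
    rw [← abs_neg, ← abs_neg (τ - c₁)]
    exact Real.rpow_le_rpow (abs_nonneg _) (by convert this using 2 <;> ring) hr

lemma integral_abs_sub_neg_rpow_add_integral_abs_sub_rpow_le {r s x : ℝ} (hr : 0 ≤ r)
    (hs : s ∈ Icc 0 1) (hx : x ∈ Icc (-1) 1) :
    (∫ τ in (-1)..x, |τ - -s| ^ r) + ∫ τ in x..1, |τ - s| ^ r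
      ≤ ((1 - s) ^ (r + 1) + (1 + s) ^ (r + 1)) / (r + 1) := by
  obtain ⟨hs0, hs1⟩ := hs
  refine (integral_abs_sub_rpow_add_le_max hr (by linarith) hx.1 hx.2).trans_eq ?_
  rw [integral_abs_sub_rpow hr (by linarith) (by linarith),
    integral_abs_sub_rpow hr (by linarith) hs1]
  ring_nf
  exact max_self _

lemma IsRSIntegral.exists_abs_sum_sub_lt {f g : ℝ → ℝ} {a b I : ℝ} (hI : IsRSIntegral f g a b I)
    {ε : ℝ} (hε : 0 < ε) :
    ∃ δ > 0, ∀ (n : ℕ) (u ξ : ℕ → ℝ), Monotone u → u 0 = a → u n = b →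
      (∀ k, ξ k ∈ Icc (u k) (u (k + 1))) → (∀ k, u (k + 1) - u k < δ) →
      |∑ k ∈ Finset.range n, f (ξ k) * (g (u (k + 1)) - g (u k)) - I| < ε := by
  obtain ⟨δ, hδ, hsum⟩ := hI ε hε
  refine ⟨δ, hδ, fun n u ξ hu hu0 hun hξ hstep => ?_⟩
  have := hsum n (fun i => u i) (fun i => ξ i) (fun i j hij => hu hij) hu0 hun
    (fun i => hξ i) (fun i => hstep i)
  simpa [Fin.sum_univ_eq_sum_range (fun k => f (ξ k) * (g (u (k + 1)) - g (u k)))] using this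

lemma exists_monotone_seq_through_mesh_lt {a x b δ : ℝ} (hax : a ≤ x) (hxb : x ≤ b) (hδ : 0 < δ) :
    ∃ (m : ℕ) (u : ℕ → ℝ), Monotone u ∧ u 0 = a ∧ u m = x ∧ u (m + m) = b ∧
      ∀ k, u (k + 1) - u k < δ := by
  obtain ⟨m, hm⟩ := exists_nat_gt ((b - a) / δ)
  have hm0 : (0 : ℝ) < m := lt_of_le_of_lt (div_nonneg (by linarith) hδ.le) hm
  have hmesh : (b - a) / m < δ := by
    rw [div_lt_iff₀ hm0]; rw [div_lt_iff₀ hδ] at hm; linarith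
  set d : ℕ → ℝ := fun j => if j < m then (x - a) / m else (b - x) / m
  have hd_nonneg : ∀ j, 0 ≤ d j := fun j => by
    unfold d; split_ifs <;> exact div_nonneg (by linarith) hm0.le
  have hd_lt : ∀ j, d j < δ := fun j => by
    refine lt_of_le_of_lt ?_ hmesh
    unfold d; split_ifs <;> gcongr
  set u : ℕ → ℝ := fun k => a + ∑ j ∈ Finset.range k, d j
  have hstep : ∀ k, u (k + 1) - u k = d k := fun k => by
    simp only [u, Finset.sum_range_succ]; ring
  have hfirst : ∑ j ∈ Finset.range m, d j = x - a := by
    rw [Finset.sum_congr rfl fun j hj => if_pos (Finset.mem_range.1 hj)]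
    simp only [Finset.sum_const, Finset.card_range, nsmul_eq_mul]; field_simp
  have hsecond : ∑ j ∈ Finset.range m, d (m + j) = b - x := by
    rw [Finset.sum_congr rfl fun j _ => if_neg (by omega)]
    simp only [Finset.sum_const, Finset.card_range, nsmul_eq_mul]; field_simp
  refine ⟨m, u, monotone_nat_of_le_succ fun k => ?_, by simp [u], ?_, ?_, fun k => ?_⟩
  · linarith [hstep k, hd_nonneg k]
  · simp only [u, hfirst]; ring
  · simp only [u, Finset.sum_range_add, hfirst, hsecond]; ring
  · rw [hstep]; exact hd_lt k

section HolderLipschitz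

variable {f g : ℝ → ℝ} {r Hf Lg : ℝ} {s : Set ℝ}
  (hf : ∀ x ∈ s, ∀ y ∈ s, |f x - f y| ≤ Hf * |x - y| ^ r)
  (hg : ∀ x ∈ s, ∀ y ∈ s, |g x - g y| ≤ Lg * |x - y|)
  (hHf : 0 ≤ Hf) (hLg : 0 ≤ Lg) (hr : 0 ≤ r)
include hf hg hHf hLg hr

lemma abs_sub_mul_sub_le_integral {u v c : ℝ} (huv : u ≤ v) (hs : Icc u v ⊆ s) (hc : c ∈ s) :
    |(f (max u (min c v)) - f c) * (g v - g u)| ≤ Lg * Hf * ∫ τ in u..v, |τ - c| ^ r := by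
  set ξ := max u (min c v)
  have hξ : ξ ∈ Icc u v := ⟨le_max_left _ _, max_le huv (min_le_right _ _)⟩
  have hconst : |ξ - c| ^ r * (v - u) ≤ ∫ τ in u..v, |τ - c| ^ r := by
    have := intervalIntegral.integral_mono_on huv intervalIntegrable_const
      (intervalIntegrable_abs_sub_rpow hr c u v) fun τ hτ =>
        Real.rpow_le_rpow (abs_nonneg _) (abs_max_min_sub_le hτ) hr
    rwa [intervalIntegral.integral_const, smul_eq_mul, mul_comm] at this
  have hgvu : |g v - g u| ≤ Lg * (v - u) := by
    simpa [abs_of_nonneg (sub_nonneg.2 huv)] using hg v (hs ⟨huv, le_rfl⟩) u (hs ⟨le_rfl, huv⟩)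
  calc |(f ξ - f c) * (g v - g u)| = |f ξ - f c| * |g v - g u| := abs_mul _ _
    _ ≤ (Hf * |ξ - c| ^ r) * (Lg * (v - u)) :=
        mul_le_mul (hf ξ (hs hξ) c hc) hgvu (abs_nonneg _) (by positivity)
    _ = Lg * Hf * (|ξ - c| ^ r * (v - u)) := by ring
    _ ≤ Lg * Hf * ∫ τ in u..v, |τ - c| ^ r := by gcongr

lemma abs_sum_sub_mul_sub_le_integral {u : ℕ → ℝ} (hu : Monotone u) {n : ℕ} {c : ℝ}
    (hs : Icc (u 0) (u n) ⊆ s) (hc : c ∈ s) :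
    |∑ k ∈ Finset.range n, f (max (u k) (min c (u (k + 1)))) * (g (u (k + 1)) - g (u k))
        - f c * (g (u n) - g (u 0))|
      ≤ Lg * Hf * ∫ τ in u 0..u n, |τ - c| ^ r := by
  have htel : g (u n) - g (u 0) = ∑ k ∈ Finset.range n, (g (u (k + 1)) - g (u k)) :=
    (Finset.sum_range_sub (fun k => g (u k)) n).symm
  rw [htel, Finset.mul_sum, ← Finset.sum_sub_distrib,
    ← intervalIntegral.sum_integral_adjacent_intervals
      fun k _ => intervalIntegrable_abs_sub_rpow hr c _ _, Finset.mul_sum]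
  refine (Finset.abs_sum_le_sum_abs _ _).trans (Finset.sum_le_sum fun k hk => ?_)
  have hk : k + 1 ≤ n := Finset.mem_range.1 hk
  rw [← sub_mul]
  exact abs_sub_mul_sub_le_integral hf hg hHf hLg hr (hu k.le_succ)
    (fun τ hτ => hs ⟨(hu k.zero_le).trans hτ.1, hτ.2.trans (hu hk)⟩) hc

lemma abs_rsIntegral_sub_two_node_le {a x b c₁ c₂ I : ℝ} (hax : a ≤ x) (hxb : x ≤ b)
    (hs : Icc a b ⊆ s) (hc₁ : c₁ ∈ s) (hc₂ : c₂ ∈ s) (hI : IsRSIntegral f g a b I) :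
    |I - (g x - g a) * f c₁ - (g b - g x) * f c₂|
      ≤ Lg * Hf * ((∫ τ in a..x, |τ - c₁| ^ r) + ∫ τ in x..b, |τ - c₂| ^ r) := by
  refine le_of_forall_pos_le_add fun ε hε => ?_
  obtain ⟨δ, hδ, hsum⟩ := hI.exists_abs_sum_sub_lt hε
  obtain ⟨m, u, hu, hu0, hum, hu2m, hmesh⟩ := exists_monotone_seq_through_mesh_lt hax hxb hδ
  set ξ : ℕ → ℝ := fun k => max (u k) (min (if k < m then c₁ else c₂) (u (k + 1)))
  have hRS := hsum (m + m) u ξ hu hu0 hu2m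
    (fun k => ⟨le_max_left _ _, max_le (hu k.le_succ) (min_le_right _ _)⟩) hmesh
  have hleft := abs_sum_sub_mul_sub_le_integral hf hg hHf hLg hr hu (n := m)
    (by rw [hu0, hum]; exact (Icc_subset_Icc_right hxb).trans hs) hc₁
  have hright := abs_sum_sub_mul_sub_le_integral hf hg hHf hLg hr (u := fun k => u (m + k))
    (fun i j hij => hu (by omega)) (n := m)
    (by simp only [add_zero, hum, hu2m]; exact (Icc_subset_Icc_left hax).trans hs) hc₂
  simp only [add_zero, hum, hu2m, hu0] at hleft hright
  have hsplit : ∑ k ∈ Finset.range (m + m), f (ξ k) * (g (u (k + 1)) - g (u k))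
      = ∑ k ∈ Finset.range m, f (max (u k) (min c₁ (u (k + 1)))) * (g (u (k + 1)) - g (u k))
        + ∑ k ∈ Finset.range m, f (max (u (m + k)) (min c₂ (u (m + (k + 1)))))
            * (g (u (m + (k + 1))) - g (u (m + k))) := by
    rw [Finset.sum_range_add]
    congr 1 <;> refine Finset.sum_congr rfl fun k hk => ?_
    · simp [ξ, Finset.mem_range.1 hk]
    · simp [ξ, add_assoc]
  rw [hsplit] at hRS
  rw [abs_le] at hleft hright ⊢
  rw [abs_lt] at hRS
  constructor <;> linarith [hleft.1, hleft.2, hright.1, hright.2, hRS.1, hRS.2]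

end HolderLipschitz

theorem two_point_GL_holder_lipschitz_general (f g : ℝ → ℝ) (r Hf Lg : ℝ)
    (hr : 0 < r)
    (hf : ∀ x ∈ Set.Icc (-1 : ℝ) 1, ∀ y ∈ Set.Icc (-1 : ℝ) 1,
      |f x - f y| ≤ Hf * |x - y| ^ r)
    (hg : ∀ x ∈ Set.Icc (-1 : ℝ) 1, ∀ y ∈ Set.Icc (-1 : ℝ) 1,
      |g x - g y| ≤ Lg * |x - y|)
    (I : ℝ) (hI : IsRSIntegral f g (-1) 1 I)
    (A B : ℝ)
    (hA : A = (Real.sqrt 3 / 2) *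
      ((∫ t in (-1 : ℝ)..1, g t) - ((3 - Real.sqrt 3) / 3) * g 1
        - ((3 + Real.sqrt 3) / 3) * g (-1)))
    (hB : B = (Real.sqrt 3 / 2) *
      (((3 + Real.sqrt 3) / 3) * g 1 + ((3 - Real.sqrt 3) / 3) * g (-1)
        - ∫ t in (-1 : ℝ)..1, g t))
    (hA0 : 0 ≤ A) (hB0 : 0 ≤ B) :
    |I - A * f (-(Real.sqrt 3) / 3) - B * f (Real.sqrt 3 / 3)|
      ≤ (Lg * Hf / (r + 1))
        * (((3 - Real.sqrt 3) / 3) ^ (r + 1) + ((3 + Real.sqrt 3) / 3) ^ (r + 1)) := by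
  have hone : (1 : ℝ) ∈ Icc (-1) 1 := by norm_num
  have hmone : (-1 : ℝ) ∈ Icc (-1) 1 := by norm_num
  have hHf : 0 ≤ Hf := nonneg_of_mul_nonneg_left ((abs_nonneg _).trans (hf 1 hone (-1) hmone))
    (by positivity)
  have hLg : 0 ≤ Lg := nonneg_of_mul_nonneg_left ((abs_nonneg _).trans (hg 1 hone (-1) hmone))
    (by norm_num)
  have h3 : Real.sqrt 3 ^ 2 = 3 := Real.sq_sqrt (by norm_num)
  have hsqrt3 : Real.sqrt 3 ≤ 3 := by nlinarith [Real.sqrt_nonneg 3]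
  set σ := Real.sqrt 3 / 3 with hσ_def
  have hσ : σ ∈ Icc 0 1 := ⟨by positivity, by rw [hσ_def]; linarith⟩
  have hAB : A + B = g 1 - g (-1) := by rw [hA, hB]; linear_combination (g 1 - g (-1)) / 3 * h3
  have hgc : ContinuousOn g (Icc (-1) 1) :=
    (LipschitzOnWith.of_dist_le' (K := Lg) fun x hx y hy => hg x hx y hy).continuousOn
  obtain ⟨x, hx, hgx⟩ := intermediate_value_Icc (by norm_num) hgc
    (⟨by linarith, by linarith⟩ : g (-1) + A ∈ Icc (g (-1)) (g 1))
  have hnodes := abs_rsIntegral_sub_two_node_le hf hg hHf hLg hr.le hx.1 hx.2 subset_rfl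
    (c₁ := -σ) ⟨by linarith [hσ.2], by linarith [hσ.1]⟩ ⟨by linarith [hσ.1], hσ.2⟩ hI
  have hint := integral_abs_sub_neg_rpow_add_integral_abs_sub_rpow_le hr.le hσ hx
  rw [show -(Real.sqrt 3) / 3 = -σ by ring, show (3 - Real.sqrt 3) / 3 = 1 - σ by ring,
    show (3 + Real.sqrt 3) / 3 = 1 + σ by ring, show A = g x - g (-1) by linarith,
    show B = g 1 - g x by linarith]
  calc _ ≤ Lg * Hf * (((1 - σ) ^ (r + 1) + (1 + σ) ^ (r + 1)) / (r + 1)) :=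
        hnodes.trans (by gcongr)
    _ = _ := by ring

/-- If `f` is of `r`-`H_f`-Hölder type on `[-1,1]` and `g` is
`L_g`-Lipschitzian on `[-1,1]` with `g (-1) < g 1`, and the weights `A`, `B` of
the two-point Gauss–Legendre rule are nonnegative, then
`|∫_{-1}^1 f dg - A·f(-√3/3) - B·f(√3/3)|
  ≤ (L_g·H_f/(r+1)) · [((3-√3)/3)^(r+1) + ((3+√3)/3)^(r+1)]`. -/
theorem two_point_GL_holder_lipschitz (f g : ℝ → ℝ) (r Hf Lg : ℝ)
    (hr : 0 < r) (hHf : 0 < Hf)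
    (hf : ∀ x ∈ Set.Icc (-1 : ℝ) 1, ∀ y ∈ Set.Icc (-1 : ℝ) 1,
      |f x - f y| ≤ Hf * |x - y| ^ r)
    (hg : ∀ x ∈ Set.Icc (-1 : ℝ) 1, ∀ y ∈ Set.Icc (-1 : ℝ) 1,
      |g x - g y| ≤ Lg * |x - y|)
    (hg' : g (-1) < g 1)
    (I : ℝ) (hI : IsRSIntegral f g (-1) 1 I)
    (A B : ℝ)
    (hA : A = (Real.sqrt 3 / 2) *
      ((∫ t in (-1 : ℝ)..1, g t) - ((3 - Real.sqrt 3) / 3) * g 1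
        - ((3 + Real.sqrt 3) / 3) * g (-1)))
    (hB : B = (Real.sqrt 3 / 2) *
      (((3 + Real.sqrt 3) / 3) * g 1 + ((3 - Real.sqrt 3) / 3) * g (-1)
        - ∫ t in (-1 : ℝ)..1, g t))
    (hA0 : 0 ≤ A) (hB0 : 0 ≤ B) :
    |I - A * f (-(Real.sqrt 3) / 3) - B * f (Real.sqrt 3 / 3)|
      ≤ (Lg * Hf / (r + 1))
        * (((3 - Real.sqrt 3) / 3) ^ (r + 1) + ((3 + Real.sqrt 3) / 3) ^ (r + 1)) :=
  two_point_GL_holder_lipschitz_general f g r Hf Lg hr hf hg I hI A B hA hB hA0 hB0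
end

section
/- Let f, g : [-1,1] → ℝ be such that f is L_f-Lipschitzian on [−1,1], i.e. |f(x) − f(y)| ≤ L_f·|x − y| for all x, y ∈ [−1,1], and g is L_g-Lipschitzian on [−1,1] with g(−1) < g(1). Define A = (√3/2)·[∫_{-1}^{1} g(t) dt − ((3−√3)/3)·g(1) − ((3+√3)/3)·g(−1)] and B = (√3/2)·[((3+√3)/3)·g(1) + ((3−√3)/3)·g(−1) − ∫_{-1}^{1} g(t) dt], and assume A ≥ 0 and B ≥ 0. Then |∫_{-1}^{1} f(t) dg(t) − A·f(−√3/3) − B·f(√3/3)| ≤ (4/3)·L_f·L_g. -/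
open MeasureTheory intervalIntegral

set_option maxHeartbeats 2000000

private lemma poly_integral (c a b : ℝ) :
    (∫ t in a..b, (5/3*(t - c)^2 + 3/20))
      = 5/3*(((b-c)^3 - (a-c)^3)/3) + 3/20*(b - a) := by
  have e : (fun t : ℝ => 5/3*(t - c)^2 + 3/20)
      = fun t : ℝ => 5/3*t^2 + (-(10/3)*c)*t + (5/3*c^2 + 3/20) :=
    funext fun t => by ring
  rw [e]
  have i1 : IntervalIntegrable (fun t : ℝ => 5/3*t^2) volume a b :=
    (continuous_const.mul (continuous_pow 2)).intervalIntegrable a b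
  have i2 : IntervalIntegrable (fun t : ℝ => (-(10/3)*c)*t) volume a b :=
    (continuous_const.mul continuous_id).intervalIntegrable a b
  have i3 : IntervalIntegrable (fun _ : ℝ => 5/3*c^2 + 3/20) volume a b :=
    intervalIntegrable_const
  rw [intervalIntegral.integral_add (i1.add i2) i3, intervalIntegral.integral_add i1 i2,
    intervalIntegral.integral_const_mul, intervalIntegral.integral_const_mul,
    integral_pow, integral_id, intervalIntegral.integral_const, smul_eq_mul]
  push_cast
  ring

private lemma per_interval (g : ℝ → ℝ) (Lf Lg m fa la lb a b : ℝ)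
    (ha : -1 ≤ a) (hab : a ≤ b) (hb : b ≤ 1)
    (hLg0 : 0 ≤ Lg) (hLf0 : 0 ≤ Lf) (hm : |m| ≤ Lf)
    (hlin : lb - la = m * (b - a))
    (hg : ∀ x ∈ Set.Icc (-1 : ℝ) 1, ∀ y ∈ Set.Icc (-1 : ℝ) 1, |g x - g y| ≤ Lg * |x - y|)
    (hint : IntervalIntegrable g volume a b) :
    |fa * (g b - g a) - (lb * g b - la * g a - m * ∫ t in a..b, g t)|
      ≤ Lg * |fa - la| * (b - a) + 2 * Lf * Lg * (b - a) ^ 2 := by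
  have hamem : a ∈ Set.Icc (-1:ℝ) 1 := ⟨ha, le_trans hab hb⟩
  have hbmem : b ∈ Set.Icc (-1:ℝ) 1 := ⟨le_trans ha hab, hb⟩
  have hba : (0:ℝ) ≤ b - a := by linarith
  have hsub : (∫ t in a..b, (g t - g a)) = (∫ t in a..b, g t) - g a * (b - a) := by
    rw [intervalIntegral.integral_sub hint intervalIntegrable_const,
      intervalIntegral.integral_const, smul_eq_mul]
    ring
  have key : fa * (g b - g a) - (lb * g b - la * g a - m * ∫ t in a..b, g t)
      = (fa - lb) * (g b - g a) + m * ∫ t in a..b, (g t - g a) := by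
    rw [hsub]; linear_combination (-(g a)) * hlin
  have h1 : |g b - g a| ≤ Lg * (b - a) := by
    have h := hg b hbmem a hamem
    rwa [abs_of_nonneg hba] at h
  have h2 : |∫ t in a..b, (g t - g a)| ≤ Lg * (b - a) * (b - a) := by
    have h := intervalIntegral.norm_integral_le_of_norm_le_const (C := Lg * (b-a))
      (f := fun t => g t - g a) (a := a) (b := b) ?_
    · rw [Real.norm_eq_abs, abs_of_nonneg hba] at h
      exact h
    · intro x hx
      rw [Set.uIoc_of_le hab] at hx
      have hxmem : x ∈ Set.Icc (-1:ℝ) 1 := ⟨by linarith [hx.1], le_trans hx.2 hb⟩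
      have h := hg x hxmem a hamem
      rw [Real.norm_eq_abs]
      refine le_trans h ?_
      rw [abs_of_nonneg (by linarith [hx.1] : (0:ℝ) ≤ x - a)]
      have hxb : x - a ≤ b - a := by linarith [hx.2]
      nlinarith [hx.1]
  have h3 : |fa - lb| ≤ |fa - la| + Lf * (b - a) := by
    have e : fa - lb = (fa - la) + (-(m * (b - a))) := by linear_combination - hlin
    rw [e]
    refine le_trans (abs_add_le _ _) ?_
    rw [abs_neg, abs_mul, abs_of_nonneg hba]
    nlinarith [abs_nonneg m]
  rw [key]
  calc |(fa - lb) * (g b - g a) + m * ∫ t in a..b, (g t - g a)|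
      ≤ |fa - lb| * |g b - g a| + |m| * |∫ t in a..b, (g t - g a)| := by
        refine le_trans (abs_add_le _ _) ?_
        rw [abs_mul, abs_mul]
    _ ≤ (|fa - la| + Lf * (b - a)) * (Lg * (b - a)) + Lf * (Lg * (b - a) * (b - a)) := by
        refine add_le_add (mul_le_mul h3 h1 (abs_nonneg _)
          (add_nonneg (abs_nonneg _) (mul_nonneg hLf0 hba)))
          (mul_le_mul hm h2 (abs_nonneg _) hLf0)
    _ ≤ Lg * |fa - la| * (b - a) + 2 * Lf * Lg * (b - a) ^ 2 := by
        nlinarith [abs_nonneg (fa - la), mul_nonneg hLf0 hLg0]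

/-- If `f` is `L_f`-Lipschitzian and `g` is `L_g`-Lipschitzian on
`[-1,1]` with `g (-1) < g 1`, and the weights `A`, `B` of the two-point
Gauss–Legendre rule are nonnegative, then
`|∫_{-1}^1 f dg - A·f(-√3/3) - B·f(√3/3)| ≤ (4/3)·L_f·L_g`. -/
theorem two_point_GL_lipschitz_lipschitz (f g : ℝ → ℝ) (Lf Lg : ℝ)
    (hf : ∀ x ∈ Set.Icc (-1 : ℝ) 1, ∀ y ∈ Set.Icc (-1 : ℝ) 1,
      |f x - f y| ≤ Lf * |x - y|)
    (hg : ∀ x ∈ Set.Icc (-1 : ℝ) 1, ∀ y ∈ Set.Icc (-1 : ℝ) 1,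
      |g x - g y| ≤ Lg * |x - y|)
    (hg' : g (-1) < g 1)
    (I : ℝ) (hI : IsRSIntegral f g (-1) 1 I)
    (A B : ℝ)
    (hA : A = (Real.sqrt 3 / 2) *
      ((∫ t in (-1 : ℝ)..1, g t) - ((3 - Real.sqrt 3) / 3) * g 1
        - ((3 + Real.sqrt 3) / 3) * g (-1)))
    (hB : B = (Real.sqrt 3 / 2) *
      (((3 + Real.sqrt 3) / 3) * g 1 + ((3 - Real.sqrt 3) / 3) * g (-1)
        - ∫ t in (-1 : ℝ)..1, g t))
    (hA0 : 0 ≤ A) (hB0 : 0 ≤ B) :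
    |I - A * f (-(Real.sqrt 3) / 3) - B * f (Real.sqrt 3 / 3)|
      ≤ (4 / 3) * Lf * Lg := by
  have hs3 : Real.sqrt 3 ^ 2 = 3 := Real.sq_sqrt (by norm_num)
  set s := Real.sqrt 3 with hsdef
  have hs0 : 0 ≤ s := Real.sqrt_nonneg 3
  clear_value s
  have hslb : 1.73 ≤ s := by nlinarith
  have hsub' : s ≤ 1.8 := by nlinarith
  have hs3' : s ^ 3 = 3 * s := by
    have e : s ^ 3 = s ^ 2 * s := by ring
    rw [e, hs3]
  have hLf0 : 0 ≤ Lf := by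
    have h := hf 1 ⟨by norm_num, by norm_num⟩ 0 ⟨by norm_num, by norm_num⟩
    norm_num at h
    linarith [abs_nonneg (f 1 - f 0)]
  have hLg0 : 0 ≤ Lg := by
    have h := hg 1 ⟨by norm_num, by norm_num⟩ 0 ⟨by norm_num, by norm_num⟩
    norm_num at h
    linarith [abs_nonneg (g 1 - g 0)]
  set x₁ : ℝ := -s / 3 with hx1
  set x₂ : ℝ := s / 3 with hx2
  clear_value x₁ x₂
  have hx1mem : x₁ ∈ Set.Icc (-1:ℝ) 1 := ⟨by rw [hx1]; nlinarith, by rw [hx1]; nlinarith⟩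
  have hx2mem : x₂ ∈ Set.Icc (-1:ℝ) 1 := ⟨by rw [hx2]; nlinarith, by rw [hx2]; nlinarith⟩
  set m : ℝ := s/2 * (f x₂ - f x₁) with hmdef
  set L : ℝ → ℝ := fun t => s/2 * ((x₂ - t) * f x₁ + (t - x₁) * f x₂) with hL
  clear_value m L
  have hlin : ∀ p q : ℝ, L q - L p = m * (q - p) := by
    intro p q; simp only [hL, hmdef]; ring
  have hm : |m| ≤ Lf := by
    have h := hf x₂ hx2mem x₁ hx1mem
    have hd : |x₂ - x₁| = 2*s/3 := by
      rw [hx1, hx2, abs_of_nonneg (by linarith : (0:ℝ) ≤ s/3 - -s/3)]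
      ring
    rw [hd] at h
    rw [hmdef, abs_mul, abs_of_nonneg (by positivity : (0:ℝ) ≤ s/2)]
    nlinarith [abs_nonneg (f x₂ - f x₁)]
  have hd21 : x₂ - x₁ = 2*s/3 := by rw [hx1, hx2]; ring
  have hLx1 : L x₁ = f x₁ := by
    simp only [hL]
    linear_combination (s/2 * f x₁) * hd21 + (f x₁ / 3) * hs3
  have hLx2 : L x₂ = f x₂ := by
    simp only [hL]
    linear_combination (s/2 * f x₂) * hd21 + (f x₂ / 3) * hs3
  have hbase : ∀ e : ℝ, e ∈ Set.Icc (-1:ℝ) 1 → L e = f e →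
      ∀ c ∈ Set.Icc (-1:ℝ) 1, |f c - L c| ≤ 2*Lf*(5/3*(c - e)^2 + 3/20) := by
    intro e he hLe c hc
    have h1 : |f c - f e| ≤ Lf * |c - e| := hf c hc e he
    have h2 : |L e - L c| = |m| * |e - c| := by
      rw [show L e - L c = m * (e - c) from hlin c e, abs_mul]
    have h3 : |f c - L c| ≤ 2 * Lf * |c - e| := by
      have e1 : f c - L c = (f c - f e) + (L e - L c) := by rw [hLe]; ring
      calc |f c - L c| ≤ |f c - f e| + |L e - L c| := by rw [e1]; exact abs_add_le _ _
        _ = |f c - f e| + |m| * |e - c| := by rw [h2]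
        _ ≤ Lf * |c - e| + Lf * |c - e| := by
            rw [abs_sub_comm e c]
            exact add_le_add h1 (mul_le_mul_of_nonneg_right hm (abs_nonneg _))
        _ = 2 * Lf * |c - e| := by ring
    refine h3.trans ?_
    nlinarith [sq_nonneg (|c - e| - 3/10), sq_abs (c - e), abs_nonneg (c - e), hLf0]
  set P : ℝ → ℝ := fun t => min (5/3*(t - x₁)^2 + 3/20) (5/3*(t - x₂)^2 + 3/20) with hP
  clear_value P
  have hw : ∀ c ∈ Set.Icc (-1:ℝ) 1, |f c - L c| ≤ 2*Lf*(P c) := by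
    intro c hc
    have b1 := hbase x₁ hx1mem hLx1 c hc
    have b2 := hbase x₂ hx2mem hLx2 c hc
    simp only [hP]
    rcases le_total (5/3*(c - x₁)^2 + 3/20) (5/3*(c - x₂)^2 + 3/20) with h|h
    · rw [min_eq_left h]; exact b1
    · rw [min_eq_right h]; exact b2
  have hq1cont : Continuous fun t : ℝ => 5/3*(t - x₁)^2 + 3/20 :=
    (continuous_const.mul ((continuous_id.sub continuous_const).pow 2)).add continuous_const
  have hq2cont : Continuous fun t : ℝ => 5/3*(t - x₂)^2 + 3/20 :=
    (continuous_const.mul ((continuous_id.sub continuous_const).pow 2)).add continuous_const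
  have hPcont : Continuous P := by
    rw [hP]
    exact Continuous.min hq1cont hq2cont
  have hPlip : ∀ c ∈ Set.Icc (-1:ℝ) 1, ∀ d ∈ Set.Icc (-1:ℝ) 1, P c ≤ P d + 7 * |c - d| := by
    intro c hc d hd
    have key : ∀ e : ℝ, -1 ≤ e → e ≤ 1 →
        5/3*(c - e)^2 + 3/20 ≤ (5/3*(d - e)^2 + 3/20) + 7*|c - d| := by
      intro e he1 he2
      rcases abs_cases (c - d) with ⟨h1, h2⟩|⟨h1, h2⟩ <;> rw [h1]
      · nlinarith [mul_nonneg h2 (show (0:ℝ) ≤ 4 - (c + d - 2*e) by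
          linarith [hc.2, hd.2]), hc.1, hc.2, hd.1, hd.2]
      · nlinarith [mul_nonneg (show (0:ℝ) ≤ d - c by linarith)
          (show (0:ℝ) ≤ (c + d - 2*e) + 4 by linarith [hc.1, hd.1]), hc.1, hc.2, hd.1, hd.2]
    simp only [hP]
    rcases le_total (5/3*(d - x₁)^2 + 3/20) (5/3*(d - x₂)^2 + 3/20) with h|h
    · rw [min_eq_left h]
      exact le_trans (min_le_left _ _) (key x₁ hx1mem.1 hx1mem.2)
    · rw [min_eq_right h]
      exact le_trans (min_le_right _ _) (key x₂ hx2mem.1 hx2mem.2)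
  have hgcont : ContinuousOn g (Set.Icc (-1:ℝ) 1) := by
    have hlip : LipschitzOnWith (Real.toNNReal Lg) g (Set.Icc (-1:ℝ) 1) := by
      rw [lipschitzOnWith_iff_dist_le_mul]
      intro x hx y hy
      rw [Real.dist_eq, Real.dist_eq]
      calc |g x - g y| ≤ Lg * |x - y| := hg x hx y hy
        _ = (Real.toNNReal Lg : ℝ) * |x - y| := by rw [Real.coe_toNNReal _ hLg0]
    exact hlip.continuousOn
  have hgint : ∀ a b : ℝ, a ∈ Set.Icc (-1:ℝ) 1 → b ∈ Set.Icc (-1:ℝ) 1 →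
      IntervalIntegrable g volume a b := by
    intro a b ha hb
    have hsub2 : Set.uIcc a b ⊆ Set.Icc (-1:ℝ) 1 := by
      rw [show Set.Icc (-1:ℝ) 1 = Set.uIcc (-1:ℝ) 1 from
        (Set.uIcc_of_le (by norm_num)).symm]
      exact Set.uIcc_subset_uIcc (by rwa [Set.uIcc_of_le (by norm_num)])
        (by rwa [Set.uIcc_of_le (by norm_num)])
    exact (hgcont.mono hsub2).intervalIntegrable
  have hAB : A * f x₁ + B * f x₂
      = L 1 * g 1 - L (-1) * g (-1) - m * ∫ t in (-1:ℝ)..1, g t := by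
    rw [hA, hB]
    simp only [hL, hmdef, hx1, hx2]
    ring
  have hPval : (∫ t in (-1:ℝ)..1, P t) ≤ 3/5 := by
    have i1 : IntervalIntegrable P volume (-1) 0 := hPcont.intervalIntegrable _ _
    have i2 : IntervalIntegrable P volume 0 1 := hPcont.intervalIntegrable _ _
    rw [← intervalIntegral.integral_add_adjacent_intervals i1 i2]
    have c1 : (∫ t in (-1:ℝ)..0, P t) ≤ ∫ t in (-1:ℝ)..0, (5/3*(t - x₁)^2 + 3/20) := by
      refine intervalIntegral.integral_mono_on (by norm_num) i1
        (hq1cont.intervalIntegrable _ _) ?_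
      intro x _
      simp only [hP]
      exact min_le_left _ _
    have c2 : (∫ t in (0:ℝ)..1, P t) ≤ ∫ t in (0:ℝ)..1, (5/3*(t - x₂)^2 + 3/20) := by
      refine intervalIntegral.integral_mono_on (by norm_num) i2
        (hq2cont.intervalIntegrable _ _) ?_
      intro x _
      simp only [hP]
      exact min_le_right _ _
    have v1 := poly_integral x₁ (-1) 0
    have v2 := poly_integral x₂ 0 1
    rw [v1] at c1
    rw [v2] at c2
    simp only [hx1, hx2] at c1 c2
    nlinarith [c1, c2, hs3, hs3', hslb, hs0]
  -- main ε argument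
  refine le_of_forall_pos_le_add fun ε hε => ?_
  obtain ⟨δ, hδ0, hδ⟩ := hI (ε/2) (by positivity)
  obtain ⟨n, hn⟩ := exists_nat_gt (max (2/δ) (128*(Lf*Lg+1)/ε))
  have h2δ : (0:ℝ) < 2/δ := by positivity
  have hnR : (0:ℝ) < n := lt_trans (lt_of_lt_of_le h2δ (le_max_left _ _)) hn
  have hn0 : n ≠ 0 := by
    intro h; rw [h] at hnR; norm_num at hnR
  have hmesh : 2/(n:ℝ) < δ := by
    have h := lt_of_le_of_lt (le_max_left (2/δ) (128*(Lf*Lg+1)/ε)) hn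
    rw [div_lt_iff₀ hδ0] at h
    rw [div_lt_iff₀ hnR]
    nlinarith
  have htail : 64*(Lf*Lg)/(n:ℝ) ≤ ε/2 := by
    have h := lt_of_le_of_lt (le_max_right (2/δ) (128*(Lf*Lg+1)/ε)) hn
    rw [div_lt_iff₀ hε] at h
    rw [div_le_iff₀ hnR]
    nlinarith [mul_nonneg hLf0 hLg0]
  set u : ℕ → ℝ := fun k => -1 + 2*(k:ℝ)/(n:ℝ) with hu
  clear_value u
  have hu0 : u 0 = -1 := by simp [hu]
  have hun : u n = 1 := by
    simp only [hu]
    rw [mul_div_assoc, div_self (ne_of_gt hnR)]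
    norm_num
  have hustep : ∀ k : ℕ, u (k+1) - u k = 2/(n:ℝ) := by
    intro k
    simp only [hu]
    push_cast
    field_simp
    ring
  have hΔ0 : (0:ℝ) < 2/(n:ℝ) := by positivity
  have humono : ∀ k : ℕ, u k ≤ u (k+1) := fun k => by linarith [hustep k]
  have humem : ∀ k : ℕ, k ≤ n → u k ∈ Set.Icc (-1:ℝ) 1 := by
    intro k hk
    have hk' : (k:ℝ) ≤ n := by exact_mod_cast hk
    constructor
    · simp only [hu]
      have h : (0:ℝ) ≤ 2*(k:ℝ)/n := by positivity
      linarith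
    · simp only [hu]
      have h : 2*(k:ℝ)/n ≤ 2 := by
        rw [div_le_iff₀ hnR]; linarith
      linarith
  set tt : Fin (n+1) → ℝ := fun i => u i with htt
  set ξ : Fin n → ℝ := fun i => tt i.castSucc with hξ
  clear_value tt ξ
  have hmono : Monotone tt := by
    intro i j hij
    simp only [htt, hu]
    have hij' : ((i:ℕ):ℝ) ≤ ((j:ℕ):ℝ) := by exact_mod_cast hij
    have h2 : 2*((i:ℕ):ℝ)/(n:ℝ) ≤ 2*((j:ℕ):ℝ)/(n:ℝ) := by
      rw [div_le_div_iff₀ hnR hnR]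
      nlinarith [mul_nonneg (sub_nonneg.mpr hij') (le_of_lt hnR)]
    linarith
  have e1 : ∀ i : Fin n, tt i.succ = u ((i:ℕ)+1) := by
    intro i; simp [htt, Fin.val_succ]
  have e2 : ∀ i : Fin n, tt i.castSucc = u (i:ℕ) := by
    intro i; simp [htt, Fin.coe_castSucc]
  have key := hδ n tt ξ hmono (by simp [htt, hu]) (by
      simp only [htt, Fin.val_last]
      exact hun)
    (fun i => by
      simp only [hξ]
      exact ⟨le_refl _, hmono (Fin.castSucc_le_succ i)⟩)
    (fun i => by
      rw [e1 i, e2 i]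
      linarith [hustep (i:ℕ)])
  set Ssum : ℝ := ∑ k ∈ Finset.range n, f (u k) * (g (u (k+1)) - g (u k)) with hS
  have hconv : (∑ i : Fin n, f (ξ i) * (g (tt i.succ) - g (tt i.castSucc))) = Ssum := by
    rw [hS, ← Fin.sum_univ_eq_sum_range (fun k => f (u k) * (g (u (k+1)) - g (u k))) n]
    apply Finset.sum_congr rfl
    intro i _
    simp only [hξ]
    rw [e1 i, e2 i]
  rw [hconv] at key
  have hQ : A * f x₁ + B * f x₂
      = ∑ k ∈ Finset.range n,
        ((L (u (k+1)) * g (u (k+1)) - L (u k) * g (u k))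
          - m * ∫ t in (u k)..(u (k+1)), g t) := by
    rw [Finset.sum_sub_distrib]
    rw [Finset.sum_range_sub (fun k => L (u k) * g (u k)) n]
    rw [← Finset.mul_sum]
    rw [intervalIntegral.sum_integral_adjacent_intervals
      (fun k hk => hgint (u k) (u (k+1)) (humem k hk.le) (humem (k+1) hk))]
    rw [hu0, hun, hAB]
  have hk_bound : ∀ k ∈ Finset.range n,
      |f (u k) * (g (u (k+1)) - g (u k))
        - ((L (u (k+1)) * g (u (k+1)) - L (u k) * g (u k))
          - m * ∫ t in (u k)..(u (k+1)), g t)|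
      ≤ 2*Lf*Lg*(∫ t in (u k)..(u (k+1)), P t) + 16*Lf*Lg*(2/(n:ℝ))^2 := by
    intro k hk
    rw [Finset.mem_range] at hk
    have hmem1 := humem k hk.le
    have hmem2 := humem (k+1) hk
    have hstep := hustep k
    have hper := per_interval g Lf Lg m (f (u k)) (L (u k)) (L (u (k+1)))
      (u k) (u (k+1)) hmem1.1 (humono k) hmem2.2 hLg0 hLf0 hm (hlin _ _) hg
      (hgint _ _ hmem1 hmem2)
    rw [hstep] at hper
    have hw' := hw (u k) hmem1
    have hPstep : P (u k) * (2/(n:ℝ)) ≤ (∫ t in (u k)..(u (k+1)), P t) + 7*(2/(n:ℝ))^2 := by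
      have hmono_int : (∫ _t in (u k)..(u (k+1)), (P (u k) - 7*(2/(n:ℝ))))
          ≤ ∫ t in (u k)..(u (k+1)), P t := by
        refine intervalIntegral.integral_mono_on (humono k) intervalIntegrable_const
          (hPcont.intervalIntegrable _ _) ?_
        intro x hx
        have hxmem : x ∈ Set.Icc (-1:ℝ) 1 := ⟨le_trans hmem1.1 hx.1, le_trans hx.2 hmem2.2⟩
        have hlipx := hPlip (u k) hmem1 x hxmem
        have habs : |u k - x| ≤ 2/(n:ℝ) := by
          rw [abs_of_nonpos (by linarith [hx.1])]
          linarith [hx.2, hstep]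
        linarith
      rw [intervalIntegral.integral_const, smul_eq_mul, hstep] at hmono_int
      nlinarith [hmono_int]
    have hPk0 : 0 ≤ P (u k) := by
      simp only [hP]
      exact le_min (by positivity) (by positivity)
    calc |f (u k) * (g (u (k+1)) - g (u k))
        - ((L (u (k+1)) * g (u (k+1)) - L (u k) * g (u k))
          - m * ∫ t in (u k)..(u (k+1)), g t)|
        ≤ Lg * |f (u k) - L (u k)| * (2/(n:ℝ)) + 2*Lf*Lg*(2/(n:ℝ))^2 := hper
      _ ≤ Lg * (2*Lf*(P (u k))) * (2/(n:ℝ)) + 2*Lf*Lg*(2/(n:ℝ))^2 := by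
          have := mul_le_mul_of_nonneg_right
            (mul_le_mul_of_nonneg_left hw' hLg0) (le_of_lt hΔ0)
          linarith
      _ = 2*Lf*Lg*(P (u k) * (2/(n:ℝ))) + 2*Lf*Lg*(2/(n:ℝ))^2 := by ring
      _ ≤ 2*Lf*Lg*((∫ t in (u k)..(u (k+1)), P t) + 7*(2/(n:ℝ))^2) + 2*Lf*Lg*(2/(n:ℝ))^2 := by
          have h := mul_le_mul_of_nonneg_left hPstep
            (by positivity : (0:ℝ) ≤ 2*Lf*Lg)
          linarith
      _ = 2*Lf*Lg*(∫ t in (u k)..(u (k+1)), P t) + 16*Lf*Lg*(2/(n:ℝ))^2 := by ring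
  have hPadj : (∑ k ∈ Finset.range n, ∫ t in (u k)..(u (k+1)), P t) = ∫ t in (-1:ℝ)..1, P t := by
    rw [intervalIntegral.sum_integral_adjacent_intervals
      (fun k _ => hPcont.intervalIntegrable (u k) (u (k+1)))]
    rw [hu0, hun]
  have htotal : |Ssum - (A * f x₁ + B * f x₂)| ≤ 2*Lf*Lg*(3/5) + 64*(Lf*Lg)/(n:ℝ) := by
    rw [hQ, hS, ← Finset.sum_sub_distrib]
    refine le_trans (Finset.abs_sum_le_sum_abs _ _) ?_
    refine le_trans (Finset.sum_le_sum hk_bound) ?_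
    rw [Finset.sum_add_distrib, ← Finset.mul_sum, hPadj, Finset.sum_const,
      Finset.card_range, nsmul_eq_mul]
    have hn2 : (n:ℝ) * (16*Lf*Lg*(2/(n:ℝ))^2) = 64*(Lf*Lg)/(n:ℝ) := by
      field_simp
      ring
    rw [hn2]
    have := mul_le_mul_of_nonneg_left hPval (by positivity : (0:ℝ) ≤ 2*Lf*Lg)
    linarith
  have hfinal : |I - A * f x₁ - B * f x₂|
      ≤ |I - Ssum| + |Ssum - (A * f x₁ + B * f x₂)| := by
    have h := abs_sub_le I Ssum (A * f x₁ + B * f x₂)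
    rw [show I - (A * f x₁ + B * f x₂) = I - A * f x₁ - B * f x₂ by ring] at h
    exact h
  have hIS : |I - Ssum| < ε/2 := by
    rw [abs_sub_comm]
    exact key
  have hLfLg : 0 ≤ Lf * Lg := mul_nonneg hLf0 hLg0
  calc |I - A * f x₁ - B * f x₂|
      ≤ |I - Ssum| + |Ssum - (A * f x₁ + B * f x₂)| := hfinal
    _ ≤ ε/2 + (2*Lf*Lg*(3/5) + 64*(Lf*Lg)/(n:ℝ)) := by linarith
    _ ≤ ε/2 + (2*Lf*Lg*(3/5) + ε/2) := by linarith
    _ ≤ 4/3*Lf*Lg + ε := by nlinarith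
end
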